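/- Let (X, d_∞) be a compact metric space, let (d_j) be a monotone increasing sequence of distance functions on X with d_j ≤ d_∞ and sup_{x,y} (d_∞(x,y) − d_j(x,y)) ≤ ε_j with ε_j decreasing to 0. Let Z be the disjoint union of the spaces Z_j = X × [0, h_j] (h_j = ε_j/2, each with the metric d_{Z_j}(z_1,z_2) = min{ d_∞(x_1,x_2)+|t_1−t_2|, (h_j−t_1)+(h_j−t_2)+d_j(x_1,x_2) }), glued by identifying (x,0) ∈ Z_j with (x,0) ∈ Z_k for all x, j, k, and equip Z with d_Z(z_j, z_k) = inf_{x∈X} { d_{Z_j}(z_j, (x,0)) + d_{Z_k}((x,0), z_k) } for z_j ∈ Z_j, z_k ∈ Z_k with j ≠ k, and d_Z = d_{Z_j} on each Z_j. Then (Z, d_Z) is a metric space. -/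
import Mathlib


/-- The distance on the sheet `Z_j = X × [0, h_j]` (with `h_j = ε j / 2`), built
from `d_j` and the limit distance `dist` of `X`:
`min{ d_∞(x₁,x₂)+|t₁−t₂|, (h_j−t₁)+(h_j−t₂)+d_j(x₁,x₂) }`. -/
noncomputable def sheetD {X : Type*} [MetricSpace X]
    (d : ℕ → X → X → ℝ) (ε : ℕ → ℝ) (j : ℕ) (z w : X × ℝ) : ℝ :=
  min (dist z.1 w.1 + |z.2 - w.2|)
    ((ε j / 2 - z.2) + (ε j / 2 - w.2) + d j z.1 w.1)

/-- The glued space `Z = ⨆_j Z_j / ∼`: the common spine `X × {0}` (left summand)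
together with the open parts `X × (0, h_j]` of the sheets. -/
def Glued (X : Type*) (ε : ℕ → ℝ) : Type _ :=
  X ⊕ (Σ j : ℕ, X × {t : ℝ // t ∈ Set.Ioc 0 (ε j / 2)})

/-- The glued distance `d_Z` on `Z`: it restricts to `d_{Z_j}` on each sheet and
routes through the spine `X × {0}` between different sheets. -/
noncomputable def gluedD {X : Type*} [MetricSpace X]
    (d : ℕ → X → X → ℝ) (ε : ℕ → ℝ) : Glued X ε → Glued X ε → ℝ := fun z w =>
  match z, w with
  | .inl x, .inl y => dist x y
  | .inl x, .inr ⟨k, y, t⟩ => sheetD d ε k (x, 0) (y, (t : ℝ))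
  | .inr ⟨k, y, t⟩, .inl x => sheetD d ε k (y, (t : ℝ)) (x, 0)
  | .inr ⟨j, x, s⟩, .inr ⟨k, y, t⟩ =>
      if j = k then sheetD d ε j (x, (s : ℝ)) (y, (t : ℝ))
      else ⨅ p : X, (sheetD d ε j (x, (s : ℝ)) (p, 0) + sheetD d ε k (p, 0) (y, (t : ℝ)))

section helpers
variable {X : Type*} [MetricSpace X] (d : ℕ → X → X → ℝ) (ε : ℕ → ℝ)

lemma sheetD_nonneg' (hnonneg : ∀ j x y, 0 ≤ d j x y) (j : ℕ) (z w : X × ℝ)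
    (hz : z.2 ≤ ε j / 2) (hw : w.2 ≤ ε j / 2) : 0 ≤ sheetD d ε j z w := by
  have h1 : (0:ℝ) ≤ dist z.1 w.1 := dist_nonneg
  have h2 : (0:ℝ) ≤ |z.2 - w.2| := abs_nonneg _
  have h3 := hnonneg j z.1 w.1
  simp only [sheetD, le_min_iff]
  constructor <;> linarith

lemma sheetD_self' (hself : ∀ j x, d j x x = 0) (j : ℕ) (z : X × ℝ)
    (hz : z.2 ≤ ε j / 2) : sheetD d ε j z z = 0 := by
  simp only [sheetD, dist_self, sub_self, abs_zero, add_zero, zero_add, hself]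
  exact min_eq_left (by linarith)

lemma sheetD_symm' (hsymm : ∀ j x y, d j x y = d j y x) (j : ℕ) (z w : X × ℝ) :
    sheetD d ε j z w = sheetD d ε j w z := by
  simp only [sheetD]
  rw [dist_comm, hsymm j, abs_sub_comm]
  congr 1
  ring

lemma sheetD_def' (hnonneg : ∀ j x y, 0 ≤ d j x y) (hdef : ∀ j x y, d j x y = 0 → x = y)
    (j : ℕ) (z w : X × ℝ) (hz : z.2 ≤ ε j / 2) (hw : w.2 ≤ ε j / 2)
    (h0 : sheetD d ε j z w = 0) : z = w := by
  simp only [sheetD] at h0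
  have h1 : (0:ℝ) ≤ dist z.1 w.1 := dist_nonneg
  have h2 : (0:ℝ) ≤ |z.2 - w.2| := abs_nonneg _
  have h3 := hnonneg j z.1 w.1
  rcases le_total (dist z.1 w.1 + |z.2 - w.2|)
      ((ε j / 2 - z.2) + (ε j / 2 - w.2) + d j z.1 w.1) with hc | hc
  · rw [min_eq_left hc] at h0
    have e1 : dist z.1 w.1 = 0 := by linarith
    have e2 : |z.2 - w.2| = 0 := by linarith
    exact Prod.ext (dist_eq_zero.mp e1) (by have := abs_eq_zero.mp e2; linarith)
  · rw [min_eq_right hc] at h0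
    have e1 : d j z.1 w.1 = 0 := by linarith
    exact Prod.ext (hdef j _ _ e1) (by linarith)

lemma sheetD_tri' (hle : ∀ j x y, d j x y ≤ dist x y)
    (htri : ∀ j x y z, d j x z ≤ d j x y + d j y z) (j : ℕ)
    (a b c : X × ℝ) (hb2 : b.2 ≤ ε j / 2) :
    sheetD d ε j a c ≤ sheetD d ε j a b + sheetD d ε j b c := by
  have t1 := dist_triangle a.1 b.1 c.1
  have t2 := abs_sub_le a.2 b.2 c.2
  have t3 := htri j a.1 b.1 c.1
  have t4 := hle j a.1 b.1
  have t5 := hle j b.1 c.1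
  have t7 := neg_le_abs (a.2 - b.2)
  have t8 := le_abs_self (b.2 - c.2)
  simp only [sheetD]
  rcases le_total (dist a.1 b.1 + |a.2 - b.2|)
      ((ε j / 2 - a.2) + (ε j / 2 - b.2) + d j a.1 b.1) with h12 | h12 <;>
  rcases le_total (dist b.1 c.1 + |b.2 - c.2|)
      ((ε j / 2 - b.2) + (ε j / 2 - c.2) + d j b.1 c.1) with h23 | h23
  · rw [min_eq_left h12, min_eq_left h23]
    exact le_trans (min_le_left _ _) (by linarith)
  · rw [min_eq_left h12, min_eq_right h23]
    exact le_trans (min_le_right _ _) (by linarith)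
  · rw [min_eq_right h12, min_eq_left h23]
    exact le_trans (min_le_right _ _) (by linarith)
  · rw [min_eq_right h12, min_eq_right h23]
    exact le_trans (min_le_right _ _) (by linarith)

lemma sheetD_spine' (herr : ∀ j x y, dist x y - d j x y ≤ ε j) (j : ℕ) (p q : X) :
    sheetD d ε j (p, 0) (q, 0) = dist p q := by
  simp only [sheetD, sub_zero, abs_zero, add_zero]
  exact min_eq_left (by have := herr j p q; linarith)

lemma sheetD_spine_lb' (hnonneg : ∀ j x y, 0 ≤ d j x y) (j : ℕ) (z : X × ℝ) (p : X)
    (h1 : 0 ≤ z.2) (h2 : z.2 ≤ ε j / 2) : z.2 ≤ sheetD d ε j z (p, 0) := by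
  simp only [sheetD, sub_zero]
  refine le_min ?_ ?_
  · have hd : (0:ℝ) ≤ dist z.1 p := dist_nonneg
    linarith [le_abs_self z.2]
  · linarith [hnonneg j z.1 p]

end helpers

/-- The glued space `(Z, d_Z)` built from a compact limit
`(X, d_∞)` and a monotone increasing sequence `d_j ≤ d_∞` with uniform errors
`ε_j ↓ 0` is a metric space. -/
theorem gluedD_is_metric
    {X : Type*} [MetricSpace X] [CompactSpace X] [Nonempty X]
    (d : ℕ → X → X → ℝ) (ε : ℕ → ℝ)
    (hnonneg : ∀ j x y, 0 ≤ d j x y)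
    (hself : ∀ j x, d j x x = 0)
    (hdef : ∀ j x y, d j x y = 0 → x = y)
    (hsymm : ∀ j x y, d j x y = d j y x)
    (htri : ∀ j x y z, d j x z ≤ d j x y + d j y z)
    (hmono : ∀ j x y, d j x y ≤ d (j + 1) x y)
    (hle : ∀ j x y, d j x y ≤ dist x y)
    (herr : ∀ j x y, dist x y - d j x y ≤ ε j)
    (hεpos : ∀ j, 0 < ε j)
    (hεanti : Antitone ε)
    (hε0 : Filter.Tendsto ε Filter.atTop (nhds 0)) :
    (∀ z, gluedD d ε z z = 0)
    ∧ (∀ z w, 0 ≤ gluedD d ε z w)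
    ∧ (∀ z w, gluedD d ε z w = 0 → z = w)
    ∧ (∀ z w, gluedD d ε z w = gluedD d ε w z)
    ∧ (∀ z w v, gluedD d ε z v ≤ gluedD d ε z w + gluedD d ε w v) := by
  have hε2 : ∀ j, (0:ℝ) ≤ ε j / 2 := fun j => by linarith [hεpos j]
  have snn := sheetD_nonneg' d ε hnonneg
  have ssymm := sheetD_symm' d ε hsymm
  have stri := sheetD_tri' d ε hle htri
  have sspine := sheetD_spine' d ε herr
  have slb := sheetD_spine_lb' d ε hnonneg
  have bdd : ∀ f : X → ℝ, (∀ p, 0 ≤ f p) → BddBelow (Set.range f) :=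
    fun f hf => ⟨0, by rintro y ⟨p, rfl⟩; exact hf p⟩
  refine ⟨?_, ?_, ?_, ?_, ?_⟩
  · -- self
    rintro (x | ⟨j, x, s⟩)
    · simp [gluedD]
    · simp only [gluedD]
      simp only [eq_self_iff_true, if_true]
      exact sheetD_self' d ε hself j _ s.2.2
  · -- nonneg
    rintro (x | ⟨j, x, s⟩) (y | ⟨k, y, t⟩)
    · exact dist_nonneg
    · exact snn k (x, 0) (y, (t:ℝ)) (hε2 k) t.2.2
    · exact snn j (x, (s:ℝ)) (y, 0) s.2.2 (hε2 j)
    · simp only [gluedD]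
      by_cases hjk : j = k
      · rw [if_pos hjk]; subst hjk
        exact snn j _ _ s.2.2 t.2.2
      · rw [if_neg hjk]
        exact Real.iInf_nonneg fun p =>
          add_nonneg (snn j _ _ s.2.2 (hε2 j)) (snn k _ _ (hε2 k) t.2.2)
  · -- definite
    rintro (x | ⟨j, x, s⟩) (y | ⟨k, y, t⟩) h0
    · simp only [gluedD] at h0
      exact congrArg Sum.inl (dist_eq_zero.mp h0)
    · exfalso
      simp only [gluedD] at h0
      rw [ssymm k (x, 0) (y, (t:ℝ))] at h0
      have := slb k (y, (t:ℝ)) x t.2.1.le t.2.2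
      have ht := t.2.1
      simp only at this
      linarith
    · exfalso
      simp only [gluedD] at h0
      have := slb j (x, (s:ℝ)) y s.2.1.le s.2.2
      have hs := s.2.1
      simp only at this
      linarith
    · simp only [gluedD] at h0
      by_cases hjk : j = k
      · subst hjk
        simp only [eq_self_iff_true, if_true] at h0
        have := sheetD_def' d ε hnonneg hdef j _ _ s.2.2 t.2.2 h0
        have h1 : x = y := congrArg Prod.fst this
        have h2 : (s:ℝ) = (t:ℝ) := congrArg Prod.snd this
        subst h1
        have : s = t := Subtype.ext h2
        subst this
        rfl
      · exfalso
        rw [if_neg hjk] at h0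
        have hlow : (s:ℝ) ≤ ⨅ p : X,
            (sheetD d ε j (x, (s:ℝ)) (p, 0) + sheetD d ε k (p, 0) (y, (t:ℝ))) := by
          refine le_ciInf fun p => ?_
          have h1 := slb j (x, (s:ℝ)) p s.2.1.le s.2.2
          have h2 := snn k (p, 0) (y, (t:ℝ)) (hε2 k) t.2.2
          simp only at h1
          linarith
        have hs := s.2.1
        linarith
  · -- symmetric
    rintro (x | ⟨j, x, s⟩) (y | ⟨k, y, t⟩)
    · simp only [gluedD]; exact dist_comm x y
    · simp only [gluedD]; exact ssymm k _ _
    · simp only [gluedD]; exact ssymm j _ _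
    · simp only [gluedD]
      by_cases hjk : j = k
      · subst hjk
        simp only [eq_self_iff_true, if_true]
        exact ssymm j _ _
      · rw [if_neg hjk, if_neg (Ne.symm hjk)]
        refine iInf_congr fun p => ?_
        rw [ssymm j (x, (s:ℝ)) (p, 0), ssymm k (p, 0) (y, (t:ℝ))]
        exact add_comm _ _
  · -- triangle
    rintro (x | ⟨j, x, s⟩) (y | ⟨k, y, t⟩) (v | ⟨l, v, u⟩)
    · simp only [gluedD]; exact dist_triangle x y v
    · -- S S sheet l
      simp only [gluedD]
      have h := stri l (x, 0) (y, 0) (v, (u:ℝ)) (hε2 l)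
      rwa [sspine l x y] at h
    · -- S sheet k S
      simp only [gluedD]
      have h := stri k (x, 0) (y, (t:ℝ)) (v, 0) t.2.2
      rwa [sspine k x v] at h
    · -- S sheet k sheet l
      simp only [gluedD]
      by_cases hkl : k = l
      · subst hkl
        simp only [eq_self_iff_true, if_true]
        exact stri k (x, 0) (y, (t:ℝ)) (v, (u:ℝ)) t.2.2
      · rw [if_neg hkl]
        have key : ∀ p : X, sheetD d ε l (x, 0) (v, (u:ℝ)) - sheetD d ε k (x, 0) (y, (t:ℝ))
            ≤ sheetD d ε k (y, (t:ℝ)) (p, 0) + sheetD d ε l (p, 0) (v, (u:ℝ)) := by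
          intro p
          have a1 := stri l (x, 0) (p, 0) (v, (u:ℝ)) (hε2 l)
          rw [sspine l x p] at a1
          have a2 := stri k (x, 0) (y, (t:ℝ)) (p, 0) t.2.2
          rw [sspine k x p] at a2
          linarith
        have := le_ciInf key
        linarith
    · -- sheet j S S
      simp only [gluedD]
      have h := stri j (x, (s:ℝ)) (y, 0) (v, 0) (hε2 j)
      rwa [sspine j y v] at h
    · -- sheet j S sheet l
      simp only [gluedD]
      by_cases hjl : j = l
      · subst hjl
        simp only [eq_self_iff_true, if_true]
        exact stri j (x, (s:ℝ)) (y, 0) (v, (u:ℝ)) (hε2 j)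
      · rw [if_neg hjl]
        have hb : BddBelow (Set.range fun p : X =>
            sheetD d ε j (x, (s:ℝ)) (p, 0) + sheetD d ε l (p, 0) (v, (u:ℝ))) :=
          bdd _ fun p => add_nonneg (snn j _ _ s.2.2 (hε2 j)) (snn l _ _ (hε2 l) u.2.2)
        exact ciInf_le hb y
    · -- sheet j sheet k S
      simp only [gluedD]
      by_cases hjk : j = k
      · subst hjk
        simp only [eq_self_iff_true, if_true]
        exact stri j (x, (s:ℝ)) (y, (t:ℝ)) (v, 0) t.2.2
      · rw [if_neg hjk]
        have key : ∀ p : X, sheetD d ε j (x, (s:ℝ)) (v, 0) - sheetD d ε k (y, (t:ℝ)) (v, 0)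
            ≤ sheetD d ε j (x, (s:ℝ)) (p, 0) + sheetD d ε k (p, 0) (y, (t:ℝ)) := by
          intro p
          have a1 := stri j (x, (s:ℝ)) (p, 0) (v, 0) (hε2 j)
          rw [sspine j p v] at a1
          have a2 := stri k (p, 0) (y, (t:ℝ)) (v, 0) t.2.2
          rw [sspine k p v] at a2
          linarith
        have := le_ciInf key
        linarith
    · -- sheet j sheet k sheet l
      simp only [gluedD]
      by_cases hjk : j = k
      · subst hjk
        by_cases hjl : j = l
        · subst hjl
          simp only [eq_self_iff_true, if_true]
          exact stri j (x, (s:ℝ)) (y, (t:ℝ)) (v, (u:ℝ)) t.2.2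
        · simp only [eq_self_iff_true, if_true]
          rw [if_neg hjl, if_neg hjl]
          have hb : BddBelow (Set.range fun p : X =>
              sheetD d ε j (x, (s:ℝ)) (p, 0) + sheetD d ε l (p, 0) (v, (u:ℝ))) :=
            bdd _ fun p => add_nonneg (snn j _ _ s.2.2 (hε2 j)) (snn l _ _ (hε2 l) u.2.2)
          have key : ∀ p : X,
              (⨅ q : X, (sheetD d ε j (x, (s:ℝ)) (q, 0) + sheetD d ε l (q, 0) (v, (u:ℝ))))
                - sheetD d ε j (x, (s:ℝ)) (y, (t:ℝ))
              ≤ sheetD d ε j (y, (t:ℝ)) (p, 0) + sheetD d ε l (p, 0) (v, (u:ℝ)) := by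
            intro p
            have c1 := ciInf_le hb p
            have c2 := stri j (x, (s:ℝ)) (y, (t:ℝ)) (p, 0) t.2.2
            linarith
          have := le_ciInf key
          linarith
      · by_cases hkl : k = l
        · subst hkl
          simp only [eq_self_iff_true, if_true]
          rw [if_neg hjk, if_neg hjk]
          have hb : BddBelow (Set.range fun p : X =>
              sheetD d ε j (x, (s:ℝ)) (p, 0) + sheetD d ε k (p, 0) (v, (u:ℝ))) :=
            bdd _ fun p => add_nonneg (snn j _ _ s.2.2 (hε2 j)) (snn k _ _ (hε2 k) u.2.2)
          have key : ∀ p : X,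
              (⨅ q : X, (sheetD d ε j (x, (s:ℝ)) (q, 0) + sheetD d ε k (q, 0) (v, (u:ℝ))))
                - sheetD d ε k (y, (t:ℝ)) (v, (u:ℝ))
              ≤ sheetD d ε j (x, (s:ℝ)) (p, 0) + sheetD d ε k (p, 0) (y, (t:ℝ)) := by
            intro p
            have c1 := ciInf_le hb p
            have c2 := stri k (p, 0) (y, (t:ℝ)) (v, (u:ℝ)) t.2.2
            linarith
          have := le_ciInf key
          linarith
        · by_cases hjl : j = l
          · subst hjl
            simp only [eq_self_iff_true, if_true]
            rw [if_neg hjk, if_neg (fun h => hjk h.symm)]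
            have key1 : ∀ p : X, sheetD d ε j (x, (s:ℝ)) (v, (u:ℝ))
                - (⨅ r : X, (sheetD d ε k (y, (t:ℝ)) (r, 0) + sheetD d ε j (r, 0) (v, (u:ℝ))))
                ≤ sheetD d ε j (x, (s:ℝ)) (p, 0) + sheetD d ε k (p, 0) (y, (t:ℝ)) := by
              intro p
              have inner : ∀ r : X, sheetD d ε j (x, (s:ℝ)) (v, (u:ℝ))
                  - (sheetD d ε j (x, (s:ℝ)) (p, 0) + sheetD d ε k (p, 0) (y, (t:ℝ)))
                  ≤ sheetD d ε k (y, (t:ℝ)) (r, 0) + sheetD d ε j (r, 0) (v, (u:ℝ)) := by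
                intro r
                have a1 := stri j (x, (s:ℝ)) (p, 0) (v, (u:ℝ)) (hε2 j)
                have a2 := stri j (p, 0) (r, 0) (v, (u:ℝ)) (hε2 j)
                rw [sspine j p r] at a2
                have a3 := stri k (p, 0) (y, (t:ℝ)) (r, 0) t.2.2
                rw [sspine k p r] at a3
                linarith
              have := le_ciInf inner
              linarith
            have := le_ciInf key1
            linarith
          · rw [if_neg hjl, if_neg hjk, if_neg hkl]
            have hb : BddBelow (Set.range fun q : X =>
                sheetD d ε j (x, (s:ℝ)) (q, 0) + sheetD d ε l (q, 0) (v, (u:ℝ))) :=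
              bdd _ fun q => add_nonneg (snn j _ _ s.2.2 (hε2 j)) (snn l _ _ (hε2 l) u.2.2)
            have key1 : ∀ p : X,
                (⨅ q : X, (sheetD d ε j (x, (s:ℝ)) (q, 0) + sheetD d ε l (q, 0) (v, (u:ℝ))))
                - (⨅ r : X, (sheetD d ε k (y, (t:ℝ)) (r, 0) + sheetD d ε l (r, 0) (v, (u:ℝ))))
                ≤ sheetD d ε j (x, (s:ℝ)) (p, 0) + sheetD d ε k (p, 0) (y, (t:ℝ)) := by
              intro p
              have inner : ∀ r : X,
                  (⨅ q : X, (sheetD d ε j (x, (s:ℝ)) (q, 0) + sheetD d ε l (q, 0) (v, (u:ℝ))))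
                  - (sheetD d ε j (x, (s:ℝ)) (p, 0) + sheetD d ε k (p, 0) (y, (t:ℝ)))
                  ≤ sheetD d ε k (y, (t:ℝ)) (r, 0) + sheetD d ε l (r, 0) (v, (u:ℝ)) := by
                intro r
                have c1 := ciInf_le hb p
                have c2 := stri l (p, 0) (r, 0) (v, (u:ℝ)) (hε2 l)
                rw [sspine l p r] at c2
                have c3 := stri k (p, 0) (y, (t:ℝ)) (r, 0) t.2.2
                rw [sspine k p r] at c3
                linarith
              have := le_ciInf inner
              linarith
            have := le_ciInf key1
            linarith
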